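/- arXiv:0809.2514 — 2 statements merged into one kernel-verified Lean document; each statement's English description precedes it below -/
import Mathlib

section
/- Let n ≥ 2 and q > n. There exists a constant c = c(n,q) such that for every measurable f on a measurable set E ⊆ ℝⁿ with |E| ≤ V, one has (∫₀^{V} σ^{−2(n−1)/n} ∫₀^σ f_*(τ)² dτ dσ)^{1/2} ≤ c · V^{(q−n)/(qn)} ‖f‖_{L^q(E)}, where f_* is the nonincreasing rearrangement of |f|. -/
open MeasureTheory Set
open intervalIntegral
noncomputable section

/-- The nonincreasing rearrangement of `|f|` on a measurable set `E`:
`f_*(τ) = inf { s ≥ 0 : |{x ∈ E : |f x| > s}| ≤ τ }`. -/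
def rearrangement {n : ℕ} (E : Set (EuclideanSpace ℝ (Fin n)))
    (f : EuclideanSpace ℝ (Fin n) → ℝ) (τ : ℝ) : ℝ :=
  sInf {s : ℝ | 0 ≤ s ∧ volume {x ∈ E | s < |f x|} ≤ ENNReal.ofReal τ}

/-- For `n ≥ 2` and `q > n` there is `c = c(n,q)` such that for every measurable `f`
on a measurable `E ⊆ ℝⁿ` with `|E| ≤ V`:
`(∫₀^V σ^{−2(n−1)/n} ∫₀^σ f_*(τ)² dτ dσ)^{1/2} ≤ c · V^{(q−n)/(qn)} ‖f‖_{L^q(E)}`. -/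
theorem rearrangement_estimate (n : ℕ) (hn : 2 ≤ n) (q : ℝ) (hq : (n : ℝ) < q) :
    ∃ c > 0, ∀ (E : Set (EuclideanSpace ℝ (Fin n))), MeasurableSet E →
      ∀ (V : ℝ), 0 < V → volume E ≤ ENNReal.ofReal V →
      ∀ (f : EuclideanSpace ℝ (Fin n) → ℝ),
        MemLp f (ENNReal.ofReal q) (volume.restrict E) →
        (∫ σ in Set.Ioc (0 : ℝ) V,
            σ ^ (-(2 : ℝ) * ((n : ℝ) - 1) / n) *
              ∫ τ in Set.Ioc (0 : ℝ) σ, (rearrangement E f τ) ^ 2) ^ ((1 : ℝ) / 2) ≤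
          c * V ^ ((q - n) / (q * n)) *
            (eLpNorm f (ENNReal.ofReal q) (volume.restrict E)).toReal := by
  have hn2 : (2 : ℝ) ≤ (n : ℝ) := by exact_mod_cast hn
  have hn0 : (0 : ℝ) < (n : ℝ) := by linarith
  have hq2 : (2 : ℝ) < q := lt_of_le_of_lt hn2 hq
  have hq0 : (0 : ℝ) < q := by linarith
  set r : ℝ := -2 / q with hrdef
  have hr : (-1 : ℝ) < r := by
    have : 2 / q < 1 := (div_lt_one hq0).mpr hq2
    rw [hrdef]; rw [neg_div]; linarith
  have hr1 : (0 : ℝ) < r + 1 := by linarith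
  set a : ℝ := -(2 : ℝ) * ((n : ℝ) - 1) / n with hadef
  have ha : a ≤ 0 := by
    rw [hadef]
    apply div_nonpos_of_nonpos_of_nonneg <;> nlinarith
  set b : ℝ := a + r + 1 with hbdef
  have hb1 : b + 1 = 2 / n - 2 / q := by
    rw [hbdef, hadef, hrdef]; field_simp; ring
  have hb1pos : (0 : ℝ) < b + 1 := by
    rw [hb1]
    have : 2 / q < 2 / n := div_lt_div_of_pos_left (by norm_num) hn0 hq
    linarith
  have hb : (-1 : ℝ) < b := by linarith
  set e : ℝ := (q - n) / (q * n) with hedef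
  have he2 : 2 * e = b + 1 := by
    rw [hedef, hb1]; field_simp
  set c : ℝ := (((r + 1) * (b + 1))⁻¹) ^ ((1 : ℝ) / 2) with hcdef
  have hXpos : (0 : ℝ) < ((r + 1) * (b + 1))⁻¹ := by positivity
  have hc : 0 < c := Real.rpow_pos_of_pos hXpos _
  refine ⟨c, hc, ?_⟩
  intro E hE V hV hEV f hf
  set p := ENNReal.ofReal q with hpdef
  have hp0 : p ≠ 0 := by
    simp [hpdef, ENNReal.ofReal_eq_zero, not_le, hq0]
  have hpt : p ≠ ⊤ := ENNReal.ofReal_ne_top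
  have hpq : p.toReal = q := ENNReal.toReal_ofReal hq0.le
  set M := (eLpNorm f p (volume.restrict E)).toReal with hMdef
  have hM0 : 0 ≤ M := ENNReal.toReal_nonneg
  -- membership of the Chebyshev bound in the defining set of the rearrangement
  have hmem : ∀ τ : ℝ, 0 < τ →
      (M * τ ^ (-1 / q)) ∈
        {s : ℝ | 0 ≤ s ∧ volume {x ∈ E | s < |f x|} ≤ ENNReal.ofReal τ} := by
    intro τ hτ
    have hτq : (0 : ℝ) < τ ^ (-1 / q) := Real.rpow_pos_of_pos hτ _
    refine ⟨by positivity, ?_⟩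
    have hset : {x ∈ E | M * τ ^ (-1 / q) < |f x|}
        = {x | M * τ ^ (-1 / q) < |f x|} ∩ E := by
      ext x; exact and_comm
    rw [hset, ← Measure.restrict_apply' hE]
    rcases eq_or_lt_of_le hM0 with hM | hM
    · -- `‖f‖ = 0`, so `f = 0` a.e.
      have h0 : eLpNorm f p (volume.restrict E) = 0 := by
        rcases ENNReal.toReal_eq_zero_iff _ |>.mp hM.symm with h | h
        · exact h
        · exact absurd h hf.2.ne
      have hf0 : f =ᵐ[volume.restrict E] 0 :=
        (eLpNorm_eq_zero_iff hf.1 hp0).mp h0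
      have hz : volume.restrict E {x | ¬ f x = 0} = 0 := ae_iff.mp hf0
      have hsub : {x | M * τ ^ (-1 / q) < |f x|} ⊆ {x | ¬ f x = 0} := by
        intro x hx
        simp only [mem_setOf_eq] at hx ⊢
        intro h
        rw [h] at hx
        simp only [abs_zero] at hx
        nlinarith
      rw [measure_mono_null hsub hz]
      exact zero_le
    · -- Chebyshev–Markov
      have hMpos : 0 < M := hM
      have hs₀ : (0 : ℝ) < M * τ ^ (-1 / q) := by positivity
      have hεne : ENNReal.ofReal (M * τ ^ (-1 / q)) ≠ 0 :=
        (ENNReal.ofReal_pos.mpr hs₀).ne'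
      have cheb := meas_ge_le_mul_pow_eLpNorm_enorm (volume.restrict E) hp0 hpt hf.1 hεne
        (fun h => absurd h ENNReal.ofReal_ne_top)
      have hsub : {x | M * τ ^ (-1 / q) < |f x|}
          ⊆ {x | ENNReal.ofReal (M * τ ^ (-1 / q)) ≤ ‖f x‖ₑ} := by
        intro x hx
        simp only [mem_setOf_eq] at hx ⊢
        rw [Real.enorm_eq_ofReal_abs]
        exact ENNReal.ofReal_le_ofReal hx.le
      refine le_trans (measure_mono hsub) (le_trans cheb (le_of_eq ?_))
      have hEL : eLpNorm f p (volume.restrict E) = ENNReal.ofReal M :=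
        (ENNReal.ofReal_toReal hf.2.ne).symm
      rw [hpq, hEL, ENNReal.inv_rpow, ENNReal.ofReal_rpow_of_pos hs₀,
        ENNReal.ofReal_rpow_of_pos hMpos,
        ← ENNReal.ofReal_inv_of_pos (Real.rpow_pos_of_pos hs₀ q),
        ← ENNReal.ofReal_mul (by positivity)]
      congr 1
      have h1 : (M * τ ^ (-1 / q)) ^ q = M ^ q * τ⁻¹ := by
        rw [Real.mul_rpow hM0 hτq.le, ← Real.rpow_mul hτ.le]
        congr 1
        rw [show (-1 / q) * q = -1 by field_simp, Real.rpow_neg_one]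
      rw [h1]
      have hMq : (0 : ℝ) < M ^ q := Real.rpow_pos_of_pos hMpos q
      field_simp
  have hbdd : ∀ τ : ℝ,
      BddBelow {s : ℝ | 0 ≤ s ∧ volume {x ∈ E | s < |f x|} ≤ ENNReal.ofReal τ} :=
    fun τ => ⟨0, fun x hx => hx.1⟩
  have hre_nonneg : ∀ τ : ℝ, 0 ≤ rearrangement E f τ :=
    fun τ => Real.sInf_nonneg fun x hx => hx.1
  have hre_le : ∀ τ : ℝ, 0 < τ → rearrangement E f τ ≤ M * τ ^ (-1 / q) :=
    fun τ hτ => csInf_le (hbdd τ) (hmem τ hτ)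
  have hanti : AntitoneOn (rearrangement E f) (Set.Ioi 0) := by
    intro τ₁ h1 τ₂ _ h12
    refine csInf_le_csInf (hbdd τ₂) ⟨_, hmem τ₁ h1⟩ ?_
    exact fun s hs => ⟨hs.1, hs.2.trans (ENNReal.ofReal_le_ofReal h12)⟩
  -- pointwise bound for the squared rearrangement
  have hpt2 : ∀ τ : ℝ, 0 < τ → (rearrangement E f τ) ^ 2 ≤ M ^ 2 * τ ^ r := by
    intro τ hτ
    have h1 : (rearrangement E f τ) ^ 2 ≤ (M * τ ^ (-1 / q)) ^ 2 :=
      pow_le_pow_left₀ (hre_nonneg τ) (hre_le τ hτ) 2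
    refine h1.trans (le_of_eq ?_)
    rw [mul_pow, ← Real.rpow_natCast (τ ^ (-1 / q)) 2, ← Real.rpow_mul hτ.le]
    congr 2
    rw [hrdef]; push_cast; ring
  -- measurability of the squared rearrangement on intervals
  have hg_meas : ∀ σ : ℝ, AEStronglyMeasurable (fun τ => (rearrangement E f τ) ^ 2)
      (volume.restrict (Set.Ioc 0 σ)) := by
    intro σ
    have h1 : AEMeasurable (rearrangement E f) (volume.restrict (Set.Ioc 0 σ)) :=
      aemeasurable_restrict_of_antitoneOn measurableSet_Ioc
        (hanti.mono Set.Ioc_subset_Ioi_self)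
    exact (h1.pow_const 2).aestronglyMeasurable
  -- integrability of the majorant
  have hh_int : ∀ σ : ℝ, IntegrableOn (fun τ : ℝ => M ^ 2 * τ ^ r) (Set.Ioc 0 σ) := by
    intro σ
    rcases le_or_gt σ 0 with hσ | hσ
    · rw [Set.Ioc_eq_empty (not_lt.mpr hσ)]; exact integrableOn_empty
    · have := (intervalIntegrable_rpow' hr (a := 0) (b := σ)).const_mul (M ^ 2)
      exact (intervalIntegrable_iff_integrableOn_Ioc_of_le hσ.le).mp this
  -- integrability of the squared rearrangement
  have hg_int : ∀ σ : ℝ, IntegrableOn (fun τ => (rearrangement E f τ) ^ 2) (Set.Ioc 0 σ) := by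
    intro σ
    refine (hh_int σ).mono' (hg_meas σ) ?_
    refine (ae_restrict_iff' measurableSet_Ioc).mpr (ae_of_all _ fun τ hτ => ?_)
    rw [Real.norm_eq_abs, abs_of_nonneg (sq_nonneg _)]
    exact hpt2 τ hτ.1
  -- inner integral bound
  have hinner_le : ∀ σ : ℝ, 0 < σ →
      (∫ τ in Set.Ioc (0 : ℝ) σ, (rearrangement E f τ) ^ 2)
        ≤ M ^ 2 * (σ ^ (r + 1) / (r + 1)) := by
    intro σ hσ
    have h1 : (∫ τ in Set.Ioc (0 : ℝ) σ, (rearrangement E f τ) ^ 2)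
        ≤ ∫ τ in Set.Ioc (0 : ℝ) σ, M ^ 2 * τ ^ r :=
      setIntegral_mono_on (hg_int σ) (hh_int σ) measurableSet_Ioc
        fun τ hτ => hpt2 τ hτ.1
    refine h1.trans (le_of_eq ?_)
    rw [MeasureTheory.integral_const_mul, ← integral_of_le hσ.le,
      integral_rpow (Or.inl hr), Real.zero_rpow hr1.ne', sub_zero]
  have hinner_nonneg : ∀ σ : ℝ,
      0 ≤ ∫ τ in Set.Ioc (0 : ℝ) σ, (rearrangement E f τ) ^ 2 :=
    fun σ => setIntegral_nonneg measurableSet_Ioc fun τ _ => sq_nonneg _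
  -- monotonicity (hence measurability) of the inner integral
  have hmono : Monotone (fun σ : ℝ => ∫ τ in Set.Ioc (0 : ℝ) σ, (rearrangement E f τ) ^ 2) := by
    intro σ₁ σ₂ h12
    dsimp only
    rcases lt_or_ge 0 σ₂ with h2 | h2
    · exact setIntegral_mono_set (hg_int σ₂) (ae_of_all _ fun τ => sq_nonneg _)
        (HasSubset.Subset.eventuallyLE (Set.Ioc_subset_Ioc_right h12))
    · rw [Set.Ioc_eq_empty (not_lt.mpr h2),
        Set.Ioc_eq_empty (not_lt.mpr (h12.trans h2))]
  set F : ℝ → ℝ :=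
    fun σ => σ ^ a * ∫ τ in Set.Ioc (0 : ℝ) σ, (rearrangement E f τ) ^ 2 with hFdef
  have hF_meas : AEStronglyMeasurable F (volume.restrict (Set.Ioc 0 V)) := by
    have h1 : AEMeasurable (fun σ : ℝ => σ ^ a) (volume.restrict (Set.Ioc 0 V)) :=
      aemeasurable_restrict_of_antitoneOn measurableSet_Ioc
        ((Real.antitoneOn_rpow_Ioi_of_exponent_nonpos ha).mono Set.Ioc_subset_Ioi_self)
    exact (h1.mul hmono.measurable.aemeasurable).aestronglyMeasurable
  have hF_nonneg : ∀ σ ∈ Set.Ioc (0 : ℝ) V, 0 ≤ F σ := by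
    intro σ hσ
    exact mul_nonneg (Real.rpow_nonneg hσ.1.le _) (hinner_nonneg σ)
  have hF_le : ∀ σ ∈ Set.Ioc (0 : ℝ) V, F σ ≤ M ^ 2 / (r + 1) * σ ^ b := by
    intro σ hσ
    have h1 : F σ ≤ σ ^ a * (M ^ 2 * (σ ^ (r + 1) / (r + 1))) :=
      mul_le_mul_of_nonneg_left (hinner_le σ hσ.1) (Real.rpow_nonneg hσ.1.le _)
    refine h1.trans (le_of_eq ?_)
    have h2 : σ ^ a * σ ^ (r + 1) = σ ^ b := by
      rw [← Real.rpow_add hσ.1, hbdef]; ring_nf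
    calc σ ^ a * (M ^ 2 * (σ ^ (r + 1) / (r + 1)))
        = M ^ 2 / (r + 1) * (σ ^ a * σ ^ (r + 1)) := by ring
      _ = M ^ 2 / (r + 1) * σ ^ b := by rw [h2]
  have hmaj_int : IntegrableOn (fun σ : ℝ => M ^ 2 / (r + 1) * σ ^ b) (Set.Ioc 0 V) := by
    have := (intervalIntegrable_rpow' hb (a := 0) (b := V)).const_mul
      (M ^ 2 / (r + 1))
    exact (intervalIntegrable_iff_integrableOn_Ioc_of_le hV.le).mp this
  have hF_int : IntegrableOn F (Set.Ioc 0 V) := by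
    refine hmaj_int.mono' hF_meas ?_
    refine (ae_restrict_iff' measurableSet_Ioc).mpr (ae_of_all _ fun σ hσ => ?_)
    rw [Real.norm_eq_abs, abs_of_nonneg (hF_nonneg σ hσ)]
    exact hF_le σ hσ
  have houter : (∫ σ in Set.Ioc (0 : ℝ) V, F σ)
      ≤ M ^ 2 / (r + 1) * (V ^ (b + 1) / (b + 1)) := by
    have h1 : (∫ σ in Set.Ioc (0 : ℝ) V, F σ)
        ≤ ∫ σ in Set.Ioc (0 : ℝ) V, M ^ 2 / (r + 1) * σ ^ b :=
      setIntegral_mono_on hF_int hmaj_int measurableSet_Ioc hF_le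
    refine h1.trans (le_of_eq ?_)
    rw [MeasureTheory.integral_const_mul, ← integral_of_le hV.le,
      integral_rpow (Or.inl hb), Real.zero_rpow hb1pos.ne', sub_zero]
  -- final computation
  have hR0 : 0 ≤ c * V ^ e * M := by positivity
  have hc2 : c ^ 2 = ((r + 1) * (b + 1))⁻¹ := by
    rw [hcdef, ← Real.rpow_natCast (((r + 1) * (b + 1))⁻¹ ^ ((1:ℝ)/2)) 2,
      ← Real.rpow_mul hXpos.le]
    norm_num
  have hV2 : (V ^ e) ^ 2 = V ^ (b + 1) := by
    rw [← Real.rpow_natCast (V ^ e) 2, ← Real.rpow_mul hV.le, ← he2]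
    norm_num [mul_comm]
  have hkey : (∫ σ in Set.Ioc (0 : ℝ) V, F σ) ≤ (c * V ^ e * M) ^ 2 := by
    refine houter.trans (le_of_eq ?_)
    have : (c * V ^ e * M) ^ 2 = c ^ 2 * (V ^ e) ^ 2 * M ^ 2 := by ring
    rw [this, hc2, hV2]
    field_simp
  calc (∫ σ in Set.Ioc (0 : ℝ) V, F σ) ^ ((1 : ℝ) / 2)
      ≤ ((c * V ^ e * M) ^ 2) ^ ((1 : ℝ) / 2) := by
        refine Real.rpow_le_rpow ?_ hkey (by norm_num)
        exact setIntegral_nonneg measurableSet_Ioc hF_nonneg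
    _ = c * V ^ e * M := by
        rw [← Real.rpow_natCast (c * V ^ e * M) 2, ← Real.rpow_mul hR0]
        norm_num
end
end

section
/- Let Ω ⊆ ℝⁿ be a bounded convex open set and let u solve the variational Neumann problem −Δu = f in Ω, ∂u/∂ν = 0 on ∂Ω, with ∫_Ω u dx = 0 and f ∈ Lⁿ(Ω) with ∫_Ω f dx = 0. Then ‖∇u‖_{L²(Ω)} ≤ C_Ω^{−1} |Ω|^{1/2} ‖f‖_{Lⁿ(Ω)}, where C_Ω is the constant in the relative isoperimetric inequality for Ω, provided the Poincaré inequality inf_t ‖u−t‖_{L^{n/(n−1)}(Ω)} ≤ C_Ω^{−1} ‖∇u‖_{L¹(Ω)} holds. -/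
open MeasureTheory Set
open scoped RealInnerProductSpace ENNReal
noncomputable section

/-- Energy estimate for the variational Neumann problem on a bounded convex domain:
if `u ∈ W^{1,2}(Ω)` with `∫_Ω u = 0` solves `∫_Ω ∇u·∇η = ∫_Ω f η` for all
`η ∈ W^{1,2}(Ω)`, where `f ∈ Lⁿ(Ω)` with `∫_Ω f = 0`, and the Poincaré inequality
`inf_t ‖u − t‖_{L^{n/(n−1)}(Ω)} ≤ C_Ω⁻¹ ‖∇u‖_{L¹(Ω)}` holds, then
`‖∇u‖_{L²(Ω)} ≤ C_Ω⁻¹ |Ω|^{1/2} ‖f‖_{Lⁿ(Ω)}`. -/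
theorem neumann_energy_estimate (n : ℕ) (hn : 2 ≤ n)
    (Ω : Set (EuclideanSpace ℝ (Fin n)))
    (hΩo : IsOpen Ω) (hconv : Convex ℝ Ω) (hbd : Bornology.IsBounded Ω)
    (hne : Ω.Nonempty) (C : ℝ) (hC : 0 < C)
    (u f : EuclideanSpace ℝ (Fin n) → ℝ)
    (hudiff : DifferentiableOn ℝ u Ω)
    (hu2 : MemLp u 2 (volume.restrict Ω))
    (hgrad2 : MemLp (fun x => gradient u x) 2 (volume.restrict Ω))
    (humean : ∫ x in Ω, u x = 0)
    (hf : MemLp f (n : ℝ≥0∞) (volume.restrict Ω))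
    (hfmean : ∫ x in Ω, f x = 0)
    (hvar : ∀ η : EuclideanSpace ℝ (Fin n) → ℝ, DifferentiableOn ℝ η Ω →
      MemLp η 2 (volume.restrict Ω) →
      MemLp (fun x => gradient η x) 2 (volume.restrict Ω) →
      ∫ x in Ω, ⟪gradient u x, gradient η x⟫ = ∫ x in Ω, f x * η x)
    (hPoincare :
      ⨅ t : ℝ, eLpNorm (fun x => u x - t) (ENNReal.ofReal ((n : ℝ) / ((n : ℝ) - 1)))
          (volume.restrict Ω) ≤
        ENNReal.ofReal C⁻¹ * eLpNorm (fun x => gradient u x) 1 (volume.restrict Ω)) :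
    eLpNorm (fun x => gradient u x) 2 (volume.restrict Ω) ≤
      ENNReal.ofReal C⁻¹ * (volume Ω) ^ ((1 : ℝ) / 2) *
        eLpNorm f (n : ℝ≥0∞) (volume.restrict Ω) := by
  set μ := volume.restrict Ω with hμdef
  set r := ENNReal.ofReal ((n : ℝ) / ((n : ℝ) - 1)) with hrdef
  have hvol : volume Ω < ∞ := hbd.measure_lt_top
  haveI : IsFiniteMeasure μ := ⟨by rw [hμdef, Measure.restrict_apply_univ]; exact hvol⟩
  have hnR : (2:ℝ) ≤ (n:ℝ) := by exact_mod_cast hn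
  have hn0 : (0:ℝ) < n := by linarith
  have hn1 : (0:ℝ) < (n:ℝ) - 1 := by linarith
  have hn2e : (2:ℝ≥0∞) ≤ (n:ℝ≥0∞) := by exact_mod_cast hn
  -- conjugate exponent identity
  have hrconj : (1:ℝ≥0∞)/1 = 1/(n:ℝ≥0∞) + 1/r := by
    have h1 : (n:ℝ≥0∞) = ENNReal.ofReal (n:ℝ) := by simp
    rw [hrdef, h1, one_div, one_div, one_div, ← ENNReal.ofReal_inv_of_pos hn0,
      ← ENNReal.ofReal_inv_of_pos (by positivity),
      ← ENNReal.ofReal_add (by positivity) (by positivity)]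
    rw [show ((n:ℝ) / ((n:ℝ)-1))⁻¹ = ((n:ℝ)-1)/n by field_simp]
    rw [show (n:ℝ)⁻¹ + ((n:ℝ)-1)/n = 1 by field_simp; ring]
    simp
  set G := eLpNorm (fun x => gradient u x) 2 μ with hG
  set A := eLpNorm f (n:ℝ≥0∞) μ with hA
  -- square identity
  have hGsq : G * G = ENNReal.ofReal (∫ x, ‖gradient u x‖^2 ∂μ) := by
    have hint : Integrable (fun x => ‖gradient u x‖^2) μ := by
      simpa using hgrad2.norm.integrable_sq
    rw [MeasureTheory.ofReal_integral_eq_lintegral_ofReal hint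
      (Filter.Eventually.of_forall fun x => by positivity)]
    rw [hG, eLpNorm_eq_lintegral_rpow_enorm_toReal (by norm_num) (by norm_num)]
    have h2 : ENNReal.toReal 2 = 2 := by norm_num
    rw [h2, ← ENNReal.rpow_add_of_nonneg _ _ (by norm_num) (by norm_num)]
    rw [show (1:ℝ)/2 + 1/2 = 1 by norm_num, ENNReal.rpow_one]
    congr 1
    ext x
    rw [ENNReal.ofReal_pow (norm_nonneg _), ofReal_norm_eq_enorm,
      ← ENNReal.rpow_natCast]
    norm_num
  -- variational identity
  have hEfu : ∫ x, ‖gradient u x‖^2 ∂μ = ∫ x, f x * u x ∂μ := by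
    rw [← hvar u hudiff hu2 hgrad2]
    exact integral_congr_ae (Filter.Eventually.of_forall fun x => by
      exact (real_inner_self_eq_norm_sq (gradient u x)).symm)
  -- integrability facts
  have hfint : Integrable f μ := by
    have : MemLp f 1 μ := hf.mono_exponent (le_trans (by norm_num) hn2e)
    exact memLp_one_iff_integrable.mp this
  have hf2 : MemLp f 2 μ := hf.mono_exponent hn2e
  have hfu_int : Integrable (fun x => f x * u x) μ := by
    have h := hu2.smul (φ := f) (p := 2) (q := 2) (r := 1) hf2
      (hpqr := ⟨by simp [one_div, ENNReal.inv_two_add_inv_two]⟩)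
    rw [← memLp_one_iff_integrable]
    exact h
  -- key per-t estimate
  have key : ∀ t : ℝ, ENNReal.ofReal (∫ x, f x * u x ∂μ) ≤
      A * eLpNorm (fun x => u x - t) r μ := by
    intro t
    have hsub_int : Integrable (fun x => f x * (u x - t)) μ := by
      have heq : (fun x => f x * (u x - t)) = fun x => f x * u x - t * f x := by
        ext x; ring
      rw [heq]; exact hfu_int.sub (hfint.const_mul t)
    have heq : ∫ x, f x * u x ∂μ = ∫ x, f x * (u x - t) ∂μ := by
      have h1 : ∫ x, f x * (u x - t) ∂μ
          = ∫ x, f x * u x ∂μ - ∫ x, t * f x ∂μ := by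
        rw [← integral_sub hfu_int (hfint.const_mul t)]
        exact integral_congr_ae (Filter.Eventually.of_forall fun x => by ring)
      rw [h1, MeasureTheory.integral_const_mul]
      rw [hμdef] at *
      rw [hfmean]; ring
    calc ENNReal.ofReal (∫ x, f x * u x ∂μ)
        = ENNReal.ofReal (∫ x, f x * (u x - t) ∂μ) := by rw [heq]
      _ ≤ ENNReal.ofReal (∫ x, ‖f x * (u x - t)‖ ∂μ) := by
          apply ENNReal.ofReal_le_ofReal
          exact le_trans (le_abs_self _)
            (by rw [← Real.norm_eq_abs]; exact norm_integral_le_integral_norm _)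
      _ = eLpNorm (fun x => f x * (u x - t)) 1 μ := by
          rw [eLpNorm_one_eq_lintegral_enorm,
            ofReal_integral_norm_eq_lintegral_enorm hsub_int]
      _ ≤ A * eLpNorm (fun x => u x - t) r μ := by
          have h := eLpNorm_smul_le_mul_eLpNorm (f := fun x => u x - t) (φ := f)
            (p := (n:ℝ≥0∞)) (q := r) (r := 1)
            (hu2.1.sub aestronglyMeasurable_const) hf.1 (hpqr := ⟨by simpa [one_div] using hrconj.symm⟩)
          exact h
  -- combine with infimum and Poincaré
  have hinf : ENNReal.ofReal (∫ x, f x * u x ∂μ) ≤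
      A * ⨅ t : ℝ, eLpNorm (fun x => u x - t) r μ := by
    rw [ENNReal.mul_iInf (fun h => absurd h hf.2.ne)]
    exact le_iInf key
  have h1 : G * G ≤ A * (ENNReal.ofReal C⁻¹ * eLpNorm (fun x => gradient u x) 1 μ) := by
    rw [hGsq, hEfu]
    exact hinf.trans (mul_le_mul_right hPoincare _)
  -- L¹ ≤ L² on finite measure
  have h2 : eLpNorm (fun x => gradient u x) 1 μ ≤ G * (volume Ω) ^ ((1:ℝ)/2) := by
    have h := eLpNorm_le_eLpNorm_mul_rpow_measure_univ (p := 1) (q := 2)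
      (by norm_num) hgrad2.1
    have hexp : (1:ℝ)/(1:ℝ≥0∞).toReal - 1/(2:ℝ≥0∞).toReal = 1/2 := by norm_num
    rw [hexp] at h
    rwa [hμdef, Measure.restrict_apply_univ] at h
  have h3 : G * G ≤ (ENNReal.ofReal C⁻¹ * (volume Ω) ^ ((1:ℝ)/2) * A) * G := by
    calc G * G ≤ A * (ENNReal.ofReal C⁻¹ * eLpNorm (fun x => gradient u x) 1 μ) := h1
      _ ≤ A * (ENNReal.ofReal C⁻¹ * (G * (volume Ω) ^ ((1:ℝ)/2))) :=
          mul_le_mul_right (mul_le_mul_right h2 _) _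
      _ = (ENNReal.ofReal C⁻¹ * (volume Ω) ^ ((1:ℝ)/2) * A) * G := by ring
  rcases eq_or_ne G 0 with h | h
  · rw [h]; exact zero_le
  · exact (ENNReal.mul_le_mul_iff_left h hgrad2.2.ne).mp h3
end
end
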